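/- arXiv:1405.1795 — 3 statements merged into one kernel-verified Lean document; each statement's English description precedes it below -/
import Mathlib

section
/- Let r > 1 and b \ge 1 be integers and q a prime power. Then the number of monic irreducible polynomials g \in K[t] of degree r such that g^{\tau} \ne g for every nontrivial \tau \in Gal(K/F) equals b \cdot |Irr_{br}(q)|, where Irr_{br}(q) is the set of monic irreducible polynomials of degree br in F[t]. -/
open Polynomial Module

/-!
Count the elements `α` of an algebraic closure `Ω` of `K` of degree `b * r` over `F` in two ways.
Each of the monic irreducible `f ∈ F[X]` of degree `b * r` has `b * r` distinct roots in `Ω`.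
On the other side, for `g = minpoly K α` the Galois norm `∏ σ, g ^ σ` has coefficients in `F` and
is divisible by `minpoly F α`; the two agree, i.e. `deg_F α = b * deg_K α`, exactly when the
conjugates `g ^ σ` are pairwise distinct: then they are coprime factors of `minpoly F α`, and
conversely `minpoly F α` is squarefree. Over finite fields, `deg_F α = b * r` makes `α` a root of
`X ^ |F| ^ (b * r) - X = X ^ |K| ^ r - X`, so `deg_K α ∣ r`; hence `α` is counted iff `g` has
degree `r` and trivial stabiliser, and each such `g` has `r` roots.
-/

namespace Polynomial

section Conjugates

variable {F K : Type*} [Field F] [Field K] [Algebra F K]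

lemma map_algEquiv_mul (g : K[X]) (σ τ : K ≃ₐ[F] K) :
    g.map ((τ * σ : K ≃ₐ[F] K) : K →+* K) = (g.map (σ : K →+* K)).map (τ : K →+* K) := by
  rw [map_map]
  rfl

lemma map_algEquiv_one (g : K[X]) : g.map ((1 : K ≃ₐ[F] K) : K →+* K) = g :=
  map_id

lemma map_algebraMap_map_algEquiv (f : F[X]) (τ : K ≃ₐ[F] K) :
    (f.map (algebraMap F K)).map (τ : K →+* K) = f.map (algebraMap F K) := by
  rw [map_map]
  congr 1
  exact RingHom.ext τ.commutes

lemma irreducible_map_algEquiv {g : K[X]} (hg : Irreducible g) (τ : K ≃ₐ[F] K) :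
    Irreducible (g.map (τ : K →+* K)) :=
  (MulEquiv.irreducible_iff (mapEquiv (τ : K ≃+* K))).mpr hg

lemma map_algEquiv_injective {g : K[X]}
    (hfree : ∀ τ : K ≃ₐ[F] K, τ ≠ 1 → g.map (τ : K →+* K) ≠ g) :
    Function.Injective fun σ : K ≃ₐ[F] K ↦ g.map (σ : K →+* K) := by
  intro σ σ' (h : g.map _ = g.map _)
  by_contra hne
  refine hfree (σ'⁻¹ * σ) (mt inv_mul_eq_one.mp (Ne.symm hne)) ?_
  rw [map_algEquiv_mul, h, ← map_algEquiv_mul, inv_mul_cancel, map_algEquiv_one]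

variable (F) [FiniteDimensional F K]

noncomputable def galoisNorm (g : K[X]) : K[X] :=
  ∏ σ : K ≃ₐ[F] K, g.map (σ : K →+* K)

variable {F}

lemma map_galoisNorm (g : K[X]) (τ : K ≃ₐ[F] K) :
    (galoisNorm F g).map (τ : K →+* K) = galoisNorm F g := by
  simp only [galoisNorm, Polynomial.map_prod, ← map_algEquiv_mul]
  exact Fintype.prod_bijective _ (Group.mulLeft_bijective τ) _ _ fun _ ↦ rfl

lemma galoisNorm_mem_lifts [IsGalois F K] (g : K[X]) :
    galoisNorm F g ∈ lifts (algebraMap F K) := by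
  refine (lifts_iff_coeff_lifts _).mpr fun n ↦
    (IsGalois.mem_range_algebraMap_iff_fixed _).mpr fun τ ↦ ?_
  conv_rhs => rw [← map_galoisNorm g τ]
  rw [coeff_map]
  rfl

lemma Monic.galoisNorm {g : K[X]} (hg : g.Monic) : (galoisNorm F g).Monic :=
  monic_prod_of_monic _ _ fun _ _ ↦ hg.map _

lemma natDegree_galoisNorm [IsGalois F K] {g : K[X]} (hg : g.Monic) :
    (galoisNorm F g).natDegree = finrank F K * g.natDegree := by
  rw [galoisNorm, natDegree_prod_of_monic _ _ fun _ _ ↦ hg.map _]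
  simp only [natDegree_map, Finset.sum_const, Finset.card_univ, smul_eq_mul,
    ← Nat.card_eq_fintype_card, IsGalois.card_aut_eq_finrank]

lemma dvd_galoisNorm (g : K[X]) : g ∣ galoisNorm F g := by
  simpa only [galoisNorm, map_algEquiv_one] using Finset.dvd_prod_of_mem
    (fun σ : K ≃ₐ[F] K ↦ g.map (σ : K →+* K)) (Finset.mem_univ 1)

lemma mul_self_dvd_galoisNorm {g : K[X]} {τ : K ≃ₐ[F] K} (hτ : τ ≠ 1)
    (hfix : g.map (τ : K →+* K) = g) : g * g ∣ galoisNorm F g := by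
  classical
  have hmem : τ ∈ Finset.univ.erase (1 : K ≃ₐ[F] K) :=
    Finset.mem_erase.mpr ⟨hτ, Finset.mem_univ _⟩
  rw [galoisNorm, ← Finset.mul_prod_erase _ _ (Finset.mem_univ 1),
    ← Finset.mul_prod_erase _ _ hmem, map_algEquiv_one, hfix, ← mul_assoc]
  exact dvd_mul_right _ _

lemma galoisNorm_dvd {g p : K[X]} (hg : Irreducible g) (hgm : g.Monic)
    (hfree : ∀ τ : K ≃ₐ[F] K, τ ≠ 1 → g.map (τ : K →+* K) ≠ g)
    (hp : ∀ τ : K ≃ₐ[F] K, p.map (τ : K →+* K) = p) (hgp : g ∣ p) : galoisNorm F g ∣ p := by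
  refine Finset.prod_dvd_of_coprime (fun σ _ σ' _ hne ↦ ?_) fun σ _ ↦ hp σ ▸ map_dvd _ hgp
  refine (irreducible_map_algEquiv hg σ).coprime_iff_not_dvd.mpr fun hdvd ↦
    hne (map_algEquiv_injective hfree ?_)
  exact eq_of_monic_of_associated (hgm.map _) (hgm.map _)
    ((irreducible_map_algEquiv hg σ).associated_of_dvd (irreducible_map_algEquiv hg σ') hdvd)

end Conjugates

end Polynomial

section Minpoly

variable {F K Ω : Type*} [Field F] [Field K] [Field Ω] [Algebra F K] [Algebra F Ω] [Algebra K Ω]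
  [IsScalarTower F K Ω]

lemma minpoly_map_dvd_of_mem_lifts {p : K[X]} (hp : p ∈ lifts (algebraMap F K)) {α : Ω}
    (hα : aeval α p = 0) : (minpoly F α).map (algebraMap F K) ∣ p := by
  obtain ⟨p', rfl⟩ := hp
  exact Polynomial.map_dvd _ (minpoly.dvd F α (by rwa [← aeval_map_algebraMap K]))

variable [FiniteDimensional F K] [IsGalois F K]

lemma minpoly_map_dvd_galoisNorm (α : Ω) :
    (minpoly F α).map (algebraMap F K) ∣ galoisNorm F (minpoly K α) :=
  minpoly_map_dvd_of_mem_lifts (galoisNorm_mem_lifts _)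
    (minpoly.dvd_iff.mp (dvd_galoisNorm _))

lemma natDegree_minpoly_le_finrank_mul {α : Ω} (hα : IsIntegral K α) :
    (minpoly F α).natDegree ≤ finrank F K * (minpoly K α).natDegree := by
  rw [← natDegree_galoisNorm (minpoly.monic hα), ← natDegree_map (algebraMap F K)]
  exact natDegree_le_of_dvd (minpoly_map_dvd_galoisNorm α) (minpoly.monic hα).galoisNorm.ne_zero

theorem natDegree_minpoly_eq_finrank_mul_iff {α : Ω} (hα : IsIntegral F α)
    (hsep : (minpoly F α).Separable) :
    (minpoly F α).natDegree = finrank F K * (minpoly K α).natDegree ↔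
      ∀ τ : K ≃ₐ[F] K, τ ≠ 1 → (minpoly K α).map (τ : K →+* K) ≠ minpoly K α := by
  have hαK : IsIntegral K α := hα.tower_top
  have hfK : ((minpoly F α).map (algebraMap F K)).Monic := (minpoly.monic hα).map _
  constructor
  · intro hdeg τ hτ hfix
    have heq : galoisNorm F (minpoly K α) = (minpoly F α).map (algebraMap F K) :=
      eq_of_monic_of_dvd_of_natDegree_le hfK (minpoly.monic hαK).galoisNorm
        (minpoly_map_dvd_galoisNorm α) (by
          rw [natDegree_galoisNorm (minpoly.monic hαK), natDegree_map, hdeg])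
    have hsq : Squarefree (galoisNorm F (minpoly K α)) := heq ▸ hsep.map.squarefree
    exact (minpoly.irreducible hαK).not_isUnit (hsq _ (mul_self_dvd_galoisNorm hτ hfix))
  · intro hfree
    refine le_antisymm (natDegree_minpoly_le_finrank_mul hαK) ?_
    rw [← natDegree_galoisNorm (minpoly.monic hαK), ← natDegree_map (algebraMap F K)]
    exact natDegree_le_of_dvd (galoisNorm_dvd (minpoly.irreducible hαK) (minpoly.monic hαK)
      hfree (map_algebraMap_map_algEquiv _) (minpoly.dvd_map_of_isScalarTower F K α))
      hfK.ne_zero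

end Minpoly

section FiniteField

variable {F K Ω : Type*} [Field F] [Field K] [Field Ω] [Algebra F K] [Algebra F Ω] [Algebra K Ω]
  [IsScalarTower F K Ω] [Finite F] [FiniteDimensional F K]

lemma natDegree_minpoly_dvd_of_dvd_finrank_mul {α : Ω} (hα : IsIntegral F α) {n : ℕ}
    (h : (minpoly F α).natDegree ∣ finrank F K * n) : (minpoly K α).natDegree ∣ n := by
  have hF : aeval α (X ^ Nat.card F ^ (finrank F K * n) - X : F[X]) = 0 :=
    minpoly.dvd_iff.mp ((minpoly.irreducible hα).natDegree_dvd_iff_dvd_X_pow_card_pow_sub_X.mp h)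
  have hK : aeval α (X ^ Nat.card K ^ n - X : K[X]) = 0 := by
    rw [natCard_eq_pow_finrank (K := F), ← pow_mul]
    simpa using hF
  exact (minpoly.irreducible hα.tower_top).natDegree_dvd_of_dvd_X_pow_card_pow_sub_X
    (minpoly.dvd K α hK)

variable [IsGalois F K]

theorem natDegree_minpoly_eq_finrank_mul_iff_of_finite {α : Ω} (hα : IsIntegral F α) {r : ℕ} :
    (minpoly F α).natDegree = finrank F K * r ↔ (minpoly K α).natDegree = r ∧
      ∀ τ : K ≃ₐ[F] K, τ ≠ 1 → (minpoly K α).map (τ : K →+* K) ≠ minpoly K α := by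
  have hsep : (minpoly F α).Separable :=
    PerfectField.separable_of_irreducible (minpoly.irreducible hα)
  rw [← natDegree_minpoly_eq_finrank_mul_iff hα hsep]
  constructor
  · intro hdeg
    have hdvd := natDegree_minpoly_dvd_of_dvd_finrank_mul (K := K) hα (by rw [hdeg])
    have hr : 0 < r := by
      have := minpoly.natDegree_pos hα
      rw [hdeg] at this
      exact pos_of_mul_pos_right this (Nat.zero_le _)
    have hle := hdeg ▸ natDegree_minpoly_le_finrank_mul (K := K) hα.tower_top
    have hdegK : (minpoly K α).natDegree = r :=
      le_antisymm (Nat.le_of_dvd hr hdvd) (Nat.le_of_mul_le_mul_left hle finrank_pos)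
    exact ⟨hdegK, hdegK ▸ hdeg⟩
  · rintro ⟨rfl, hdeg⟩
    exact hdeg

end FiniteField

section Counting

variable {k Ω : Type*} [Field k] [Field Ω] [Algebra k Ω]

lemma minpoly_eq_iff_mem_rootSet {f : k[X]} (hf : Irreducible f) (hfm : f.Monic) {α : Ω} :
    minpoly k α = f ↔ α ∈ f.rootSet Ω := by
  rw [mem_rootSet_of_ne hfm.ne_zero]
  exact ⟨fun h ↦ h ▸ minpoly.aeval k α, fun h ↦ (minpoly.eq_of_irreducible_of_monic hf h hfm).symm⟩

variable [PerfectField k] [IsAlgClosed Ω]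

theorem natCard_setOf_minpoly_mem {A : Set k[X]} {d : ℕ}
    (hA : ∀ f ∈ A, f.Monic ∧ Irreducible f ∧ f.natDegree = d) :
    Nat.card {α : Ω | minpoly k α ∈ A} = d * Nat.card A := by
  let φ : {α : Ω | minpoly k α ∈ A} → A := fun α ↦ ⟨minpoly k (α : Ω), α.2⟩
  have mem_rootSet_iff (f : A) {α : Ω} := minpoly_eq_iff_mem_rootSet (α := α)
    (hA f f.2).2.1 (hA f f.2).1
  let fiber (f : A) : {α // φ α = f} ≃ (f : k[X]).rootSet Ω :=
    { toFun α := ⟨α.1, (mem_rootSet_iff f).mp (congrArg Subtype.val α.2)⟩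
      invFun β := ⟨⟨β, by rw [Set.mem_ofPred_eq, (mem_rootSet_iff f).mpr β.2]; exact f.2⟩,
        Subtype.ext ((mem_rootSet_iff f).mpr β.2)⟩
      left_inv _ := rfl
      right_inv _ := rfl }
  have card_fiber (f : A) : Nat.card {α // φ α = f} = d := by
    rw [Nat.card_congr (fiber f), Nat.card_eq_fintype_card,
      card_rootSet_eq_natDegree (PerfectField.separable_of_irreducible (hA f f.2).2.1)
        (IsAlgClosed.splits _), (hA f f.2).2.2]
  rcases finite_or_infinite A with hfin | hinf
  · have := Fintype.ofFinite A
    have (f : A) : Finite {α // φ α = f} := .of_equiv _ (fiber f).symm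
    rw [← Nat.card_congr (Equiv.sigmaFiberEquiv φ), Nat.card_sigma]
    simp [card_fiber, mul_comm]
  · have hsurj : Function.Surjective φ := fun f ↦ by
      have hd : 0 < d := (hA f f.2).2.2 ▸ (hA f f.2).2.1.natDegree_pos
      obtain ⟨⟨α, hα⟩⟩ := Nat.card_pos_iff.mp (card_fiber f ▸ hd)
      exact ⟨α, hα⟩
    have := Infinite.of_surjective φ hsurj
    simp [Nat.card_eq_zero_of_infinite]

end Counting

theorem stmt12_general (b r : ℕ) (hr : 1 < r)
    (F K : Type*) [Field F] [Fintype F]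
    [Field K] [Algebra F K] [FiniteDimensional F K] (hK : Module.finrank F K = b) :
    Nat.card {g : Polynomial K | g.Monic ∧ Irreducible g ∧ g.natDegree = r ∧
        ∀ τ : K ≃ₐ[F] K, τ ≠ 1 → g.map (τ : K →+* K) ≠ g} =
      b * Nat.card {f : Polynomial F | f.Monic ∧ Irreducible f ∧ f.natDegree = b * r} := by
  subst hK
  have : Finite K := Module.finite_of_finite F
  set A := {g : K[X] | g.Monic ∧ Irreducible g ∧ g.natDegree = r ∧
    ∀ τ : K ≃ₐ[F] K, τ ≠ 1 → g.map (τ : K →+* K) ≠ g}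
  set B := {f : F[X] | f.Monic ∧ Irreducible f ∧ f.natDegree = finrank F K * r}
  have hroots : {α : AlgebraicClosure K | minpoly K α ∈ A} = {α | minpoly F α ∈ B} := by
    ext α
    have hα : IsIntegral F α := (Algebra.IsIntegral.trans K).isIntegral α
    simp only [A, B, Set.mem_ofPred_eq, minpoly.monic hα, minpoly.monic hα.tower_top,
      minpoly.irreducible hα, minpoly.irreducible hα.tower_top, true_and,
      natDegree_minpoly_eq_finrank_mul_iff_of_finite hα]
  have hcardA := natCard_setOf_minpoly_mem (Ω := AlgebraicClosure K) (A := A)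
    fun g hg ↦ ⟨hg.1, hg.2.1, hg.2.2.1⟩
  have hcardB := natCard_setOf_minpoly_mem (Ω := AlgebraicClosure K) (A := B) fun f hf ↦ hf
  rw [hroots, hcardB] at hcardA
  refine Nat.eq_of_mul_eq_mul_left (by omega : 0 < r) ?_
  rw [← hcardA]
  ring

theorem stmt12 (q b r : ℕ) (hq : IsPrimePow q) (hb : 1 ≤ b) (hr : 1 < r)
    (F K : Type*) [Field F] [Fintype F] (hF : Fintype.card F = q)
    [Field K] [Algebra F K] [FiniteDimensional F K] (hK : Module.finrank F K = b) :
    Nat.card {g : Polynomial K | g.Monic ∧ Irreducible g ∧ g.natDegree = r ∧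
        ∀ τ : K ≃ₐ[F] K, τ ≠ 1 → g.map (τ : K →+* K) ≠ g} =
      b * Nat.card {f : Polynomial F | f.Monic ∧ Irreducible f ∧ f.natDegree = b * r} :=
  stmt12_general b r hr F K hK
end

section
/- Let E be a field, V a finite-dimensional E-vector space, and let g, s, u be linear endomorphisms of V such that g is bijective, g = s \circ u, s \circ u = u \circ s, s is semisimple, and u is unipotent. Then the characteristic polynomial of g equals the characteristic polynomial of s. -/
/-!
Write `g = s u = s + s (u - 1)`. Since `s` and `u` commute, `s (u - 1)` is nilpotent and commutes
with `s`, and adding a commuting nilpotent does not change the characteristic polynomial: over the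
fraction field of `E[X]`, `X - s - n = (X - s) (1 - (X - s)⁻¹ n)` and `1 - (X - s)⁻¹ n` is
unipotent, hence has determinant one.
-/

open Module

/-- An endomorphism is semisimple if every invariant subspace has an invariant complement. -/
def IsSemisimpleEndo {E V : Type*} [Field E] [AddCommGroup V] [Module E V]
    (s : V →ₗ[E] V) : Prop :=
  ∀ p : Submodule E V, Submodule.map s p ≤ p →
    ∃ p' : Submodule E V, IsCompl p p' ∧ Submodule.map s p' ≤ p'

open Polynomial

namespace Matrix

variable {n R : Type*} [Fintype n] [DecidableEq n] [CommRing R]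

theorem charpoly_eq_X_pow_of_isNilpotent [IsDomain R] {N : Matrix n n R} (hN : IsNilpotent N) :
    N.charpoly = X ^ Fintype.card n :=
  sub_eq_zero.mp (isNilpotent_charpoly_sub_pow_of_isNilpotent hN).eq_zero

theorem det_one_add_of_isNilpotent [IsDomain R] {N : Matrix n n R} (hN : IsNilpotent N) :
    (1 + N).det = 1 := by
  have h := congrArg (eval 1) (charpoly_eq_X_pow_of_isNilpotent hN.neg)
  rwa [eval_charpoly, map_one, sub_neg_eq_add, eval_pow, eval_X, one_pow] at h

theorem det_add_of_isNilpotent_of_commute_of_field {K : Type*} [Field K] {A N : Matrix n n K}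
    (hN : IsNilpotent N) (hAN : Commute A N) : (A + N).det = A.det := by
  by_cases hA : IsUnit A
  · set B : Matrix n n K := ↑hA.unit⁻¹
    have hBN : IsNilpotent (B * N) := (hAN.units_inv_left (u := hA.unit)).isNilpotent_mul_left hN
    calc (A + N).det = (A * (1 + B * N)).det := by
          rw [mul_add, mul_one, ← mul_assoc, IsUnit.mul_val_inv, one_mul]
      _ = A.det := by rw [det_mul, det_one_add_of_isNilpotent hBN, mul_one]
  · have hAN' : ¬IsUnit (A + N) := fun h ↦ hA <| by
      simpa using hN.neg.isUnit_add_left_of_commute h (hAN.symm.add_right (Commute.refl N)).neg_left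
    rw [isUnit_iff_isUnit_det, isUnit_iff_ne_zero, not_not] at hA hAN'
    rw [hA, hAN']

theorem det_add_of_isNilpotent_of_commute [IsDomain R]
    {A N : Matrix n n R} (hN : IsNilpotent N) (hAN : Commute A N) : (A + N).det = A.det := by
  let φ := (algebraMap R (FractionRing R)).mapMatrix (m := n)
  apply IsFractionRing.injective R (FractionRing R)
  rw [RingHom.map_det, RingHom.map_det, map_add]
  exact det_add_of_isNilpotent_of_commute_of_field (hN.map φ) (hAN.map φ)

theorem charmatrix_add (A B : Matrix n n R) :
    (A + B).charmatrix = A.charmatrix - (C : R →+* R[X]).mapMatrix B := by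
  rw [charmatrix, charmatrix, map_add]
  abel

theorem charpoly_add_of_isNilpotent_of_commute [IsDomain R]
    {A N : Matrix n n R} (hN : IsNilpotent N) (hAN : Commute A N) :
    (A + N).charpoly = A.charpoly := by
  have hCN : Commute A.charmatrix (C.mapMatrix N) :=
    (scalar_commute _ (fun _ ↦ Commute.all _ _) _).sub_left (hAN.map C.mapMatrix)
  rw [charpoly, charmatrix_add, sub_eq_add_neg]
  exact det_add_of_isNilpotent_of_commute (hN.map C.mapMatrix).neg hCN.neg_right

end Matrix

namespace LinearMap

variable {R M : Type*} [CommRing R] [IsDomain R] [AddCommGroup M] [Module R M]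
  [Module.Free R M] [Module.Finite R M]

theorem charpoly_add_of_isNilpotent_of_commute {f n : End R M} (hn : IsNilpotent n)
    (hfn : Commute f n) : (f + n).charpoly = f.charpoly := by
  let φ := toMatrixAlgEquiv (Free.chooseBasis R M)
  rw [charpoly_def, charpoly_def, map_add]
  exact Matrix.charpoly_add_of_isNilpotent_of_commute (hn.map φ) (hfn.map φ)

end LinearMap

theorem stmt13_general (E V : Type*) [Field E] [AddCommGroup V] [Module E V] [FiniteDimensional E V]
    (g s u : V →ₗ[E] V) (hgsu : g = s ∘ₗ u)
    (hcomm : s ∘ₗ u = u ∘ₗ s)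
    (hu : IsNilpotent (u - LinearMap.id)) :
    LinearMap.charpoly g = LinearMap.charpoly s := by
  have hsu : Commute s u := hcomm
  have hs_u1 : Commute s (u - 1) := hsu.sub_right (Commute.one_right s)
  have hg_eq : g = s + s * (u - 1) := by
    rw [mul_sub, mul_one, add_sub_cancel, hgsu]
    rfl
  rw [hg_eq]
  exact LinearMap.charpoly_add_of_isNilpotent_of_commute (hs_u1.isNilpotent_mul_left hu)
    ((Commute.refl s).mul_right hs_u1)

theorem stmt13 (E V : Type*) [Field E] [AddCommGroup V] [Module E V] [FiniteDimensional E V]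
    (g s u : V →ₗ[E] V) (hg : Function.Bijective g) (hgsu : g = s ∘ₗ u)
    (hcomm : s ∘ₗ u = u ∘ₗ s) (hs : IsSemisimpleEndo s)
    (hu : IsNilpotent (u - LinearMap.id)) :
    LinearMap.charpoly g = LinearMap.charpoly s :=
  stmt13_general E V g s u hgsu hcomm hu
end

section
/- Let c, b be positive integers, q a prime power, and r an integer with r > c/2. Let g \in K[t] be monic irreducible of degree r such that g^{\tau} \ne g for every nontrivial \tau \in Gal(K/F). Then there is a monic irreducible polynomial f \in F[t] of degree br whose image in K[t] equals \prod_{\tau \in Gal(K/F)} g^{\tau}; and for every X \in M(c,K), the endomorphism X_{bc,q} is f-primary cyclic if and only if there is exactly one \tau \in Gal(K/F) such that g^{\tau} divides charpoly_K(X). -/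
open Matrix Polynomial Module

/-- `Y` is `f`-primary cyclic: the multiplicity of the (monic irreducible) polynomial `f`
in the characteristic polynomial of `Y` equals its multiplicity in the minimal
polynomial of `Y`, and this multiplicity is at least 1. -/
def IsPrimaryCyclic {E V : Type*} [Field E] [AddCommGroup V] [Module E V]
    [FiniteDimensional E V] (Y : V →ₗ[E] V) (f : Polynomial E) : Prop :=
  0 < multiplicity f (LinearMap.charpoly Y) ∧
    multiplicity f (LinearMap.charpoly Y) = multiplicity f (minpoly E Y)

/-!
Write `g^τ = τ • g`. The conjugates `g^τ` are pairwise distinct monic irreducibles, so their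
product is Galois-stable and descends to a monic `f ∈ F[X]` with `f ∣ u ↔ g ∣ u` for every
`u ∈ F[X]`; in particular `f` is prime. The minimal polynomial of `X_{bc,q}` over `F`, viewed in
`K[X]`, is divisible by the minimal polynomial `m` of `X` over `K` and divides the product of the
conjugates of `m`, so `f` divides it iff some `g^τ` divides `m`, i.e. divides `charpoly_K X`. Since `c < 2r`,
degree counting shows that `f²` does not divide the characteristic polynomial of `X_{bc,q}`, which
reduces `f`-primary cyclicity to `f` dividing the minimal polynomial, and that at most one `g^τ`
divides `charpoly_K X`.
-/

section GaloisAction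

variable {F K : Type*} [Field F] [Field K] [Algebra F K]

theorem AlgEquiv.smul_polynomial (τ : K ≃ₐ[F] K) (p : K[X]) : τ • p = p.map (τ : K →+* K) := by
  rw [Polynomial.smul_eq_map]; rfl

theorem Polynomial.Monic.algEquiv_smul {p : K[X]} (hp : p.Monic) (τ : K ≃ₐ[F] K) :
    (τ • p).Monic := by
  rw [AlgEquiv.smul_polynomial]; exact hp.map _

theorem Polynomial.natDegree_algEquiv_smul (τ : K ≃ₐ[F] K) (p : K[X]) :
    (τ • p).natDegree = p.natDegree := by
  rw [AlgEquiv.smul_polynomial, natDegree_map]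

theorem Irreducible.algEquiv_smul {p : K[X]} (hp : Irreducible p) (τ : K ≃ₐ[F] K) :
    Irreducible (τ • p) :=
  (MulEquiv.irreducible_iff (MulSemiringAction.toRingEquiv _ K[X] τ)).mpr hp

theorem smul_map_algebraMap (τ : K ≃ₐ[F] K) (u : F[X]) :
    τ • u.map (algebraMap F K) = u.map (algebraMap F K) := by
  rw [AlgEquiv.smul_polynomial, Polynomial.map_map]
  congr 1
  exact RingHom.ext τ.commutes

theorem smul_dvd_map_algebraMap_iff (τ : K ≃ₐ[F] K) (g : K[X]) (u : F[X]) :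
    τ • g ∣ u.map (algebraMap F K) ↔ g ∣ u.map (algebraMap F K) := by
  conv_lhs => rw [← smul_map_algebraMap τ u]
  exact map_dvd_iff (MulSemiringAction.toRingEquiv _ K[X] τ)

theorem inv_smul_dvd_of_dvd_smul {τ : K ≃ₐ[F] K} {g p : K[X]} (h : g ∣ τ • p) : τ⁻¹ • g ∣ p := by
  simpa using map_dvd (MulSemiringAction.toRingHom _ K[X] τ⁻¹) h

theorem mem_lifts_of_forall_smul_eq [IsGalois F K] {P : K[X]} (hP : ∀ τ : K ≃ₐ[F] K, τ • P = P) :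
    P ∈ lifts (algebraMap F K) :=
  P.lifts_iff_coeff_lifts.mpr fun n =>
    Algebra.IsInvariant.isInvariant (G := K ≃ₐ[F] K) _ fun τ => by rw [← coeff_smul, hP]

variable (F) in
noncomputable def conjProd [FiniteDimensional F K] (p : K[X]) : K[X] := ∏ τ : K ≃ₐ[F] K, τ • p

variable [FiniteDimensional F K]

theorem smul_conjProd (σ : K ≃ₐ[F] K) (p : K[X]) : σ • conjProd F p = conjProd F p :=
  Finset.smul_prod_perm p σ

theorem monic_conjProd {p : K[X]} (hp : p.Monic) : (conjProd F p).Monic :=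
  monic_prod_of_monic _ _ fun τ _ => hp.algEquiv_smul τ

theorem dvd_conjProd (p : K[X]) : p ∣ conjProd F p := by
  simpa [conjProd] using Finset.dvd_prod_of_mem (fun τ : K ≃ₐ[F] K => τ • p) (Finset.mem_univ 1)

variable [IsGalois F K]

theorem natDegree_conjProd {p : K[X]} (hp : p.Monic) :
    (conjProd F p).natDegree = finrank F K * p.natDegree := by
  rw [conjProd, natDegree_prod_of_monic _ _ fun τ _ => hp.algEquiv_smul τ]
  simp only [natDegree_algEquiv_smul, Finset.sum_const, Finset.card_univ, smul_eq_mul,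
    ← Nat.card_eq_fintype_card, IsGalois.card_aut_eq_finrank]

theorem exists_monic_map_eq_conjProd {p : K[X]} (hp : p.Monic) :
    ∃ f : F[X], f.Monic ∧ f.map (algebraMap F K) = conjProd F p := by
  obtain ⟨f, hf, -, hfm⟩ := lifts_and_natDegree_eq_and_monic
    (mem_lifts_of_forall_smul_eq (P := conjProd F p) (smul_conjProd · p)) (monic_conjProd hp)
  exact ⟨f, hfm, hf⟩

end GaloisAction

section DistinctConjugates

variable {F K : Type*} [Field F] [Field K] [Algebra F K] {g : K[X]}

theorem isCoprime_smul_of_ne (hgm : g.Monic) (hgi : Irreducible g)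
    (hstab : ∀ τ : K ≃ₐ[F] K, τ ≠ 1 → τ • g ≠ g) {σ τ : K ≃ₐ[F] K} (hne : σ ≠ τ) :
    IsCoprime (σ • g) (τ • g) := by
  refine (EuclideanDomain.dvd_or_coprime _ _ (hgi.algEquiv_smul σ)).resolve_left fun hdvd => ?_
  have heq : σ • g = τ • g := eq_of_monic_of_associated (hgm.algEquiv_smul σ)
    (hgm.algEquiv_smul τ) ((hgi.algEquiv_smul σ).associated_of_dvd (hgi.algEquiv_smul τ) hdvd)
  refine hstab (τ⁻¹ * σ) (by rwa [Ne, inv_mul_eq_one, eq_comm]) ?_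
  rw [mul_smul, heq, inv_smul_smul]

theorem eq_of_smul_dvd_of_smul_dvd (hgm : g.Monic) (hgi : Irreducible g)
    (hstab : ∀ τ : K ≃ₐ[F] K, τ ≠ 1 → τ • g ≠ g) {χ : K[X]} (hχ : χ ≠ 0)
    (hdeg : χ.natDegree < 2 * g.natDegree) {σ τ : K ≃ₐ[F] K} (hσ : σ • g ∣ χ)
    (hτ : τ • g ∣ χ) : σ = τ := by
  by_contra hne
  have := natDegree_le_of_dvd ((isCoprime_smul_of_ne hgm hgi hstab hne).mul_dvd hσ hτ) hχ
  rw [natDegree_mul (hgm.algEquiv_smul σ).ne_zero (hgm.algEquiv_smul τ).ne_zero,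
    natDegree_algEquiv_smul, natDegree_algEquiv_smul] at this
  omega

variable [FiniteDimensional F K]

theorem conjProd_dvd_of_forall_smul_dvd (hgm : g.Monic) (hgi : Irreducible g)
    (hstab : ∀ τ : K ≃ₐ[F] K, τ ≠ 1 → τ • g ≠ g) {u : K[X]} (hu : ∀ τ : K ≃ₐ[F] K, τ • g ∣ u) :
    conjProd F g ∣ u :=
  Finset.prod_dvd_of_coprime (fun _ _ _ _ hne => isCoprime_smul_of_ne hgm hgi hstab hne)
    fun τ _ => hu τ

theorem dvd_iff_dvd_map_of_map_eq_conjProd (hgm : g.Monic) (hgi : Irreducible g)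
    (hstab : ∀ τ : K ≃ₐ[F] K, τ ≠ 1 → τ • g ≠ g) {f : F[X]} (hf : f.Monic)
    (hfg : f.map (algebraMap F K) = conjProd F g) (u : F[X]) :
    f ∣ u ↔ g ∣ u.map (algebraMap F K) := by
  rw [← map_dvd_map (algebraMap F K) (algebraMap F K).injective hf, hfg]
  refine ⟨(dvd_conjProd g).trans, fun hg => conjProd_dvd_of_forall_smul_dvd hgm hgi hstab
    fun τ => (smul_dvd_map_algebraMap_iff τ g u).mpr hg⟩

theorem prime_of_map_eq_conjProd (hgm : g.Monic) (hgi : Irreducible g)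
    (hstab : ∀ τ : K ≃ₐ[F] K, τ ≠ 1 → τ • g ≠ g) {f : F[X]} (hf : f.Monic)
    (hfg : f.map (algebraMap F K) = conjProd F g) : Prime f := by
  refine ⟨hf.ne_zero, fun hu => hgi.not_isUnit ?_, fun u v huv => ?_⟩
  · exact isUnit_of_dvd_unit ((dvd_conjProd g).trans hfg.symm.dvd)
      (hu.map (mapRingHom (algebraMap F K)))
  · simp only [dvd_iff_dvd_map_of_map_eq_conjProd hgm hgi hstab hf hfg, Polynomial.map_mul]
      at huv ⊢
    exact hgi.prime.dvd_or_dvd huv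

end DistinctConjugates

theorem Matrix.dvd_minpoly_of_dvd_charpoly {E n : Type*} [Field E] [Fintype n] [DecidableEq n]
    (M : Matrix n n E) {p : E[X]} (hp : Irreducible p) (hdvd : p ∣ M.charpoly) :
    p ∣ minpoly E M := by
  have := Fact.mk hp
  let μ := AdjoinRoot.root p
  let N := M.map (algebraMap E (AdjoinRoot p))
  have hN : N = (Algebra.ofId E (AdjoinRoot p)).mapMatrix M := rfl
  have hμN : μ ∈ spectrum _ N := by
    rw [Matrix.mem_spectrum_iff_isRoot_charpoly, Matrix.charpoly_map]
    obtain ⟨u, hu⟩ := hdvd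
    rw [hu, Polynomial.map_mul]
    exact (AdjoinRoot.isRoot_root p).dvd (dvd_mul_right _ _)
  have hμmin : (minpoly _ N).IsRoot μ := by
    rw [← Matrix.spectrum_toLin', ← Module.End.hasEigenvalue_iff_mem_spectrum] at hμN
    simpa [Matrix.minpoly_toLin'] using Module.End.isRoot_of_hasEigenvalue hμN
  have hmin : minpoly _ N ∣ (minpoly E M).map (algebraMap E (AdjoinRoot p)) := by
    refine minpoly.dvd _ _ ?_
    rw [aeval_map_algebraMap, hN, aeval_algHom_apply, minpoly.aeval, map_zero]
  have hroot : aeval μ (minpoly E M) = 0 := by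
    have := hμmin.dvd hmin
    rwa [IsRoot, eval_map_algebraMap] at this
  have := minpoly.dvd E μ hroot
  rw [AdjoinRoot.minpoly_root hp.ne_zero] at this
  exact (dvd_mul_right p _).trans this

theorem LinearMap.dvd_minpoly_of_dvd_charpoly {E V : Type*} [Field E] [AddCommGroup V]
    [Module E V] [FiniteDimensional E V] (φ : Module.End E V) {p : E[X]} (hp : Irreducible p)
    (hdvd : p ∣ φ.charpoly) : p ∣ minpoly E φ := by
  let b := Module.finBasis E V
  rw [← LinearMap.minpoly_toMatrix b]
  rw [← LinearMap.charpoly_toMatrix φ b] at hdvd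
  exact Matrix.dvd_minpoly_of_dvd_charpoly _ hp hdvd

theorem LinearMap.minpoly_restrictScalars {F K V : Type*} [Field F] [Field K] [Algebra F K]
    [AddCommGroup V] [Module K V] [Module F V] [IsScalarTower F K V] (φ : Module.End K V) :
    minpoly F (φ.restrictScalars F) = minpoly F φ := by
  let restrict : Module.End K V →ₐ[F] Module.End F V :=
    { toFun := LinearMap.restrictScalars F
      map_one' := rfl
      map_mul' := fun _ _ => rfl
      map_zero' := rfl
      map_add' := fun _ _ => rfl
      commutes' := fun _ => rfl }
  exact minpoly.algHom_eq restrict (LinearMap.restrictScalars_injective F) φ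

theorem isPrimaryCyclic_iff_dvd_minpoly {E V : Type*} [Field E] [AddCommGroup V] [Module E V]
    [FiniteDimensional E V] (Y : Module.End E V) {f : E[X]} (hf : ¬f ^ 2 ∣ Y.charpoly) :
    IsPrimaryCyclic Y f ↔ f ∣ minpoly E Y := by
  have hmult : ∀ {u : E[X]}, f ∣ u → u ∣ Y.charpoly → multiplicity f u = 1 := fun hu hχ =>
    multiplicity_eq_of_dvd_of_not_dvd (by rwa [pow_one]) fun h => hf (h.trans hχ)
  refine ⟨fun ⟨hpos, heq⟩ => ?_, fun hfm => ?_⟩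
  · exact dvd_of_multiplicity_pos (heq ▸ hpos)
  · have hmin := LinearMap.minpoly_dvd_charpoly Y
    rw [IsPrimaryCyclic, hmult (hfm.trans hmin) dvd_rfl, hmult hfm hmin]
    exact ⟨one_pos, rfl⟩

section RestrictScalars

variable {F K V : Type*} [Field F] [Field K] [Algebra F K] [FiniteDimensional F K] [IsGalois F K]
  [AddCommGroup V] [Module K V] [FiniteDimensional K V] [Module F V] [IsScalarTower F K V]

theorem map_minpoly_dvd_conjProd_minpoly (φ : Module.End K V) :
    (minpoly F φ).map (algebraMap F K) ∣ conjProd F (minpoly K φ) := by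
  have hm : (minpoly K φ).Monic := minpoly.monic (Algebra.IsIntegral.isIntegral (R := K) φ)
  obtain ⟨q, -, hq⟩ := exists_monic_map_eq_conjProd (F := F) hm
  rw [← hq]
  refine Polynomial.map_dvd _ (minpoly.dvd F φ ?_)
  obtain ⟨d, hd⟩ := dvd_conjProd (F := F) (minpoly K φ)
  rw [← aeval_map_algebraMap K, hq, hd, map_mul, minpoly.aeval, zero_mul]

theorem dvd_minpoly_restrictScalars_iff {g : K[X]} (hgm : g.Monic) (hgi : Irreducible g)
    (hstab : ∀ τ : K ≃ₐ[F] K, τ ≠ 1 → τ • g ≠ g) {f : F[X]} (hf : f.Monic)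
    (hfg : f.map (algebraMap F K) = conjProd F g) (φ : Module.End K V) :
    f ∣ minpoly F (φ.restrictScalars F) ↔ ∃ σ : K ≃ₐ[F] K, σ • g ∣ φ.charpoly := by
  rw [LinearMap.minpoly_restrictScalars, dvd_iff_dvd_map_of_map_eq_conjProd hgm hgi hstab hf hfg]
  constructor
  · intro hg
    obtain ⟨τ, -, hτ⟩ := hgi.prime.exists_mem_finset_dvd
      (hg.trans (map_minpoly_dvd_conjProd_minpoly φ))
    exact ⟨τ⁻¹, (inv_smul_dvd_of_dvd_smul hτ).trans (LinearMap.minpoly_dvd_charpoly φ)⟩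
  · rintro ⟨σ, hσ⟩
    rw [← smul_dvd_map_algebraMap_iff σ]
    exact (LinearMap.dvd_minpoly_of_dvd_charpoly φ (hgi.algEquiv_smul σ) hσ).trans
      (minpoly.dvd_map_of_isScalarTower F K φ)

end RestrictScalars

theorem stmt14_general (b c r : ℕ) (hb : 0 < b) (hr : c < 2 * r)
    (F K : Type*) [Field F] [Fintype F]
    [Field K] [Algebra F K] [FiniteDimensional F K] (hK : Module.finrank F K = b)
    (g : Polynomial K) (hgm : g.Monic) (hgi : Irreducible g) (hgd : g.natDegree = r)
    (hgal : ∀ τ : K ≃ₐ[F] K, τ ≠ 1 → g.map (τ : K →+* K) ≠ g) :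
    ∃ f : Polynomial F, f.Monic ∧ Irreducible f ∧ f.natDegree = b * r ∧
      f.map (algebraMap F K) = (∏ τ : K ≃ₐ[F] K, g.map (τ : K →+* K)) ∧
      ∀ A : Matrix (Fin c) (Fin c) K,
        IsPrimaryCyclic ((A.mulVecLin).restrictScalars F) f ↔
          ∃! τ : K ≃ₐ[F] K, g.map (τ : K →+* K) ∣ LinearMap.charpoly A.mulVecLin := by
  have : Finite K := Module.finite_of_finite F
  simp only [← AlgEquiv.smul_polynomial] at hgal ⊢
  obtain ⟨f, hfm, hfg⟩ := exists_monic_map_eq_conjProd (F := F) hgm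
  have hfdeg : f.natDegree = b * r := by
    rw [← hfm.natDegree_map (algebraMap F K), hfg, natDegree_conjProd hgm, hK, hgd]
  refine ⟨f, hfm, (prime_of_map_eq_conjProd hgm hgi hgal hfm hfg).irreducible, hfdeg, hfg,
    fun A => ?_⟩
  have hsq : ¬f ^ 2 ∣ (A.mulVecLin.restrictScalars F).charpoly := fun h => by
    have := natDegree_le_of_dvd h (LinearMap.charpoly_monic _).ne_zero
    rw [natDegree_pow, hfdeg, LinearMap.charpoly_natDegree, ← Module.finrank_mul_finrank F K,
      hK, Module.finrank_fin_fun] at this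
    nlinarith
  have hχ : (A.mulVecLin).charpoly.natDegree < 2 * g.natDegree := by
    rwa [LinearMap.charpoly_natDegree, Module.finrank_fin_fun, hgd]
  rw [isPrimaryCyclic_iff_dvd_minpoly _ hsq, dvd_minpoly_restrictScalars_iff hgm hgi hgal hfm hfg]
  exact ⟨fun ⟨σ, hσ⟩ => ⟨σ, hσ, fun τ hτ => eq_of_smul_dvd_of_smul_dvd hgm hgi hgal
    (LinearMap.charpoly_monic _).ne_zero hχ hτ hσ⟩, fun ⟨σ, hσ, _⟩ => ⟨σ, hσ⟩⟩

theorem stmt14 (q b c r : ℕ) (hq : IsPrimePow q) (hb : 0 < b) (hc : 0 < c) (hr : c < 2 * r)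
    (F K : Type*) [Field F] [Fintype F] (hF : Fintype.card F = q)
    [Field K] [Algebra F K] [FiniteDimensional F K] (hK : Module.finrank F K = b)
    (g : Polynomial K) (hgm : g.Monic) (hgi : Irreducible g) (hgd : g.natDegree = r)
    (hgal : ∀ τ : K ≃ₐ[F] K, τ ≠ 1 → g.map (τ : K →+* K) ≠ g) :
    ∃ f : Polynomial F, f.Monic ∧ Irreducible f ∧ f.natDegree = b * r ∧
      f.map (algebraMap F K) = (∏ τ : K ≃ₐ[F] K, g.map (τ : K →+* K)) ∧
      ∀ A : Matrix (Fin c) (Fin c) K,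
        IsPrimaryCyclic ((A.mulVecLin).restrictScalars F) f ↔
          ∃! τ : K ≃ₐ[F] K, g.map (τ : K →+* K) ∣ LinearMap.charpoly A.mulVecLin :=
  stmt14_general b c r hb hr F K hK g hgm hgi hgd hgal
end
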